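/- Let S(z) = Σ_{n≥1} s_n·z^n ∈ ℚ[[z]] and let U(z) = Σ_{n≥0} u_n·z^n be the unique formal power series over ℚ with constant coefficient u_0 = 1 satisfying z·U′(z) = −S(z)·U(z). Then u_1 = 0 and, for every n ≥ 2 (with the convention e_0 = 0), u_n = (1/(n(n−1)))·Σ_{k=0}^{n−1} (3n−k−3)·u_k − (4/(n(n−1)))·Σ_{k=0}^{n−1} (n−2k−1)·e_{n−k}·u_k + (4/(n(n−1)))·Σ_{k=0}^{n−1} (Σ_{j=0}^{n−k−1} e_j)·u_k. -/

import Mathlib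

/-!
Write `θ = z d/dz`. If a tree functional splits at the root, `f (node l r) = g l * g r`, then
its Yule–Harding generating series satisfies `θF = F + G²`: a tree with `n ≥ 2` leaves splits
into subtrees with `j` and `n - j` leaves with weight `w l * w r / (n - 1)`. For `c`, `c²` and
the constant `1` (the splitting functionals being `c + 1`, `(c + 1)²` and `1`) this gives
`θE = E + (E + Y)²`, `θS = S + (S + D)²` with `D = 2E + Y`, and `θY = Y + Y²`, where
`Y = z / (1 - z)` because the weights on each `trees n` sum to `1`.
Applying `θ` to `θU = -SU` and eliminating `S` with its Riccati equation leaves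
`z²U'' = 2D·θU - D²U`, where `D² = 4(θE - E) - 4EY - 3(θY - Y)` is explicit in the `e_n`;
comparing coefficients of `z^n` is the recurrence.
-/

/-- Plane binary trees: a leaf, or an ordered pair of plane binary trees. -/
inductive PTree : Type where
  | leaf : PTree
  | node : PTree → PTree → PTree
deriving DecidableEq

namespace PTree

/-- Number of leaves of a plane binary tree. -/
def leaves : PTree → ℕ
  | leaf => 1
  | node l r => leaves l + leaves r

/-- Number of root ancestral configurations:
`c(leaf) = 0`, `c(node l r) = (c l + 1) * (c r + 1)`. -/
def c : PTree → ℕ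
  | leaf => 0
  | node l r => (c l + 1) * (c r + 1)

/-- The finite set of plane binary trees with `n` leaves. -/
def trees : ℕ → Finset PTree
  | 0 => ∅
  | 1 => {leaf}
  | (n+2) =>
      (Finset.Icc 1 (n+1)).attach.biUnion fun j =>
        ((trees j.1) ×ˢ (trees (n+2-j.1))).image fun p => node p.1 p.2
decreasing_by
  · have h := Finset.mem_Icc.mp j.2; omega
  · have h := Finset.mem_Icc.mp j.2; omega

end PTree

namespace PTree

/-- Yule–Harding weight: `w(leaf) = 1`,
`w(node l r) = w l * w r / (leaves l + leaves r - 1)`. -/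
def w : PTree → ℚ
  | leaf => 1
  | node l r => w l * w r / ((leaves l + leaves r - 1 : ℕ) : ℚ)

end PTree

namespace PTree

/-- Yule–Harding mean number of root configurations (`e 0 = 0` since `trees 0 = ∅`). -/
def e (n : ℕ) : ℚ := ∑ t ∈ trees n, w t * (c t : ℚ)

end PTree

namespace PTree

/-- Yule–Harding second moment of the number of root configurations. -/
def s (n : ℕ) : ℚ := ∑ t ∈ trees n, w t * (c t : ℚ) ^ 2

end PTree

namespace PTree

open Finset

theorem trees_zero : trees 0 = ∅ := by rw [trees]

theorem trees_one : trees 1 = {leaf} := by rw [trees]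

theorem leaves_pos : ∀ t : PTree, 0 < leaves t
  | leaf => Nat.one_pos
  | node l _ => Nat.add_pos_left (leaves_pos l) _

theorem leaves_eq_of_mem_trees {n : ℕ} {t : PTree} (ht : t ∈ trees n) : leaves t = n := by
  induction n using Nat.strong_induction_on generalizing t with
  | _ n ih =>
    match n, ht with
    | 0, ht => simp [trees_zero] at ht
    | 1, ht => rw [trees_one] at ht; rw [mem_singleton.mp ht]; rfl
    | m + 2, ht =>
      rw [trees] at ht
      obtain ⟨j, -, hmem⟩ := mem_biUnion.mp ht
      obtain ⟨p, hp, rfl⟩ := mem_image.mp hmem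
      obtain ⟨hl, hr⟩ := mem_product.mp hp
      have hj := mem_Icc.mp j.2
      rw [leaves, ih j (by omega) hl, ih (m + 2 - j) (by omega) hr]
      omega

theorem sum_trees_add_two {M : Type*} [AddCommMonoid M] (n : ℕ) (F : PTree → M) :
    ∑ t ∈ trees (n + 2), F t
      = ∑ j ∈ Icc 1 (n + 1), ∑ l ∈ trees j, ∑ r ∈ trees (n + 2 - j), F (node l r) := by
  rw [trees, sum_biUnion]
  · rw [← sum_attach (Icc 1 (n + 1))]
    refine sum_congr rfl fun j _ => ?_
    rw [sum_image (fun p _ q _ h => by injection h with h₁ h₂; exact Prod.ext h₁ h₂),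
      sum_product]
  · intro j _ j' _ hne
    refine disjoint_left.mpr fun t ht ht' => hne (Subtype.ext ?_)
    obtain ⟨p, hp, rfl⟩ := mem_image.mp ht
    obtain ⟨q, hq, hpq⟩ := mem_image.mp ht'
    injection hpq with h₁
    rw [← leaves_eq_of_mem_trees (mem_product.mp hp).1,
      ← leaves_eq_of_mem_trees (mem_product.mp hq).1, h₁]

theorem sum_trees_add_two_eq_sum_antidiagonal {M : Type*} [AddCommMonoid M] (n : ℕ)
    (F : PTree → M) :
    ∑ t ∈ trees (n + 2), F t
      = ∑ p ∈ antidiagonal (n + 2), ∑ l ∈ trees p.1, ∑ r ∈ trees p.2, F (node l r) := by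
  rw [sum_trees_add_two, Nat.sum_antidiagonal_eq_sum_range_succ_mk]
  refine sum_subset (fun j hj => ?_) (fun j hj hj' => ?_)
  · simp only [mem_Icc, mem_range] at hj ⊢; omega
  · obtain rfl | rfl : j = 0 ∨ j = n + 2 := by
      simp only [mem_Icc, mem_range] at hj hj'; omega
    all_goals simp [trees_zero]

theorem mul_w_node (l r : PTree) :
    ((leaves l + leaves r - 1 : ℕ) : ℚ) * w (node l r) = w l * w r := by
  have : (leaves l + leaves r - 1 : ℕ) ≠ 0 := by have := leaves_pos l; have := leaves_pos r; omega
  rw [w, mul_div_cancel₀ _ (by exact_mod_cast this)]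

end PTree

namespace PowerSeries

variable {R : Type*} [CommRing R]

@[simp] theorem coeff_ofNat_mul (a : ℕ) [a.AtLeastTwo] (φ : R⟦X⟧) (n : ℕ) :
    coeff n (OfNat.ofNat a * φ) = OfNat.ofNat a * coeff n φ := by
  rw [← map_ofNat C a, coeff_C_mul]

theorem coeff_mul_eq_sum_range_of_constantCoeff_eq_zero (f : R⟦X⟧) {g : R⟦X⟧}
    (hg : constantCoeff g = 0) (n : ℕ) :
    coeff n (f * g) = ∑ k ∈ Finset.range n, coeff k f * coeff (n - k) g := by
  rw [coeff_mul, Finset.Nat.sum_antidiagonal_eq_sum_range_succ_mk, Finset.sum_range_succ,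
    Nat.sub_self, coeff_zero_eq_constantCoeff_apply, hg, mul_zero, add_zero]

theorem coeff_X_mul_derivative (f : R⟦X⟧) (n : ℕ) :
    coeff n (X * d⁄dX R f) = n * coeff n f := by
  rcases n with _ | n
  · simp
  · rw [coeff_succ_X_mul, coeff_derivative]
    push_cast
    ring

theorem X_mul_derivative_mul (f g : R⟦X⟧) :
    X * d⁄dX R (f * g) = X * d⁄dX R f * g + f * (X * d⁄dX R g) := by
  rw [Derivation.leibniz, smul_eq_mul, smul_eq_mul]
  ring

theorem X_sq_mul_derivative_derivative (f : R⟦X⟧) :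
    X ^ 2 * d⁄dX R (d⁄dX R f) = X * d⁄dX R (X * d⁄dX R f) - X * d⁄dX R f := by
  rw [X_mul_derivative_mul, derivative_X]
  ring

theorem coeff_X_sq_mul_derivative_derivative (f : R⟦X⟧) (n : ℕ) :
    coeff n (X ^ 2 * d⁄dX R (d⁄dX R f)) = n * (n - 1) * coeff n f := by
  rw [X_sq_mul_derivative_derivative, map_sub, coeff_X_mul_derivative, coeff_X_mul_derivative]
  ring

theorem X_sq_mul_derivative_derivative_of_riccati {U S D : R⟦X⟧}
    (hU : X * d⁄dX R U = -S * U) (hS : X * d⁄dX R S = S + (S + D) ^ 2) :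
    X ^ 2 * d⁄dX R (d⁄dX R U) = 2 * D * (X * d⁄dX R U) - D ^ 2 * U := by
  rw [X_sq_mul_derivative_derivative, hU, X_mul_derivative_mul, map_neg, mul_neg, hS, hU]
  ring

end PowerSeries

namespace PTree

open Finset PowerSeries

def yuleMean (f : PTree → ℚ) (n : ℕ) : ℚ := ∑ t ∈ trees n, w t * f t

noncomputable def yuleSeries (f : PTree → ℚ) : ℚ⟦X⟧ := mk (yuleMean f)

@[simp] theorem yuleMean_zero (f : PTree → ℚ) : yuleMean f 0 = 0 := by
  simp [yuleMean, trees_zero]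

@[simp] theorem yuleMean_one (f : PTree → ℚ) : yuleMean f 1 = f leaf := by
  simp [yuleMean, trees_one, w]

theorem yuleMean_add (f g : PTree → ℚ) (n : ℕ) :
    yuleMean (f + g) n = yuleMean f n + yuleMean g n := by
  simp only [yuleMean, Pi.add_apply, mul_add, sum_add_distrib]

theorem yuleMean_const_mul (a : ℚ) (f : PTree → ℚ) (n : ℕ) :
    yuleMean (fun t => a * f t) n = a * yuleMean f n := by
  simp only [yuleMean, mul_sum, mul_left_comm]

theorem succ_mul_yuleMean_add_two {f g : PTree → ℚ} (hfg : ∀ l r, f (node l r) = g l * g r)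
    (n : ℕ) :
    (n + 1 : ℚ) * yuleMean f (n + 2)
      = ∑ p ∈ antidiagonal (n + 2), yuleMean g p.1 * yuleMean g p.2 := by
  rw [yuleMean, sum_trees_add_two_eq_sum_antidiagonal, mul_sum]
  refine sum_congr rfl fun p hp => ?_
  rw [yuleMean, yuleMean, sum_mul_sum, mul_sum]
  refine sum_congr rfl fun l hl => ?_
  rw [mul_sum]
  refine sum_congr rfl fun r hr => ?_
  have hlr : leaves l + leaves r - 1 = n + 1 := by
    rw [leaves_eq_of_mem_trees hl, leaves_eq_of_mem_trees hr, mem_antidiagonal.mp hp]; rfl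
  have hw := mul_w_node l r
  rw [hlr] at hw
  push_cast at hw
  rw [hfg]
  linear_combination (g l * g r) * hw

theorem yuleMean_const_one {n : ℕ} (hn : 1 ≤ n) : yuleMean (fun _ => 1) n = 1 := by
  induction n using Nat.strong_induction_on with
  | _ n ih =>
    match n, hn with
    | 1, _ => simp
    | m + 2, _ =>
      have hrec := succ_mul_yuleMean_add_two (f := fun _ => 1) (fun _ _ => (one_mul 1).symm) m
      rw [Nat.sum_antidiagonal_succ, Nat.sum_antidiagonal_succ'] at hrec
      simp only [yuleMean_zero, zero_mul, mul_zero, zero_add] at hrec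
      rw [sum_congr rfl fun p hp => by
        rw [ih (p.1 + 1) (by have := mem_antidiagonal.mp hp; omega) (by omega),
          ih (p.2 + 1) (by have := mem_antidiagonal.mp hp; omega) (by omega), one_mul]] at hrec
      rw [sum_const, Nat.card_antidiagonal, nsmul_one] at hrec
      push_cast at hrec
      exact (mul_eq_left₀ (by positivity)).mp hrec

theorem X_mul_derivative_yuleSeries {f g : PTree → ℚ} (hfg : ∀ l r, f (node l r) = g l * g r) :
    X * d⁄dX ℚ (yuleSeries f) = yuleSeries f + yuleSeries g ^ 2 := by
  ext n
  rw [coeff_X_mul_derivative, map_add, sq, coeff_mul]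
  simp only [yuleSeries, coeff_mk]
  rcases n with _ | _ | n
  · simp
  · simp [Nat.sum_antidiagonal_succ]
  · rw [← succ_mul_yuleMean_add_two hfg]
    push_cast
    ring

theorem yuleSeries_add (f g : PTree → ℚ) :
    yuleSeries (f + g) = yuleSeries f + yuleSeries g := by
  ext n
  simp only [yuleSeries, coeff_mk, map_add, yuleMean_add]

theorem yuleSeries_const_mul (a : ℚ) (f : PTree → ℚ) :
    yuleSeries (fun t => a * f t) = C a * yuleSeries f := by
  ext n
  simp only [yuleSeries, coeff_mk, coeff_C_mul, yuleMean_const_mul]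

@[simp] theorem constantCoeff_yuleSeries (f : PTree → ℚ) : constantCoeff (yuleSeries f) = 0 := by
  rw [← coeff_zero_eq_constantCoeff_apply, yuleSeries, coeff_mk, yuleMean_zero]

noncomputable def eSeries : ℚ⟦X⟧ := yuleSeries fun t => (c t : ℚ)

noncomputable def weightSeries : ℚ⟦X⟧ := yuleSeries fun _ => 1

theorem coeff_eSeries (n : ℕ) : coeff n eSeries = e n := coeff_mk _ _

theorem coeff_weightSeries {n : ℕ} (hn : 1 ≤ n) : coeff n weightSeries = 1 :=
  (coeff_mk _ _).trans (yuleMean_const_one hn)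

theorem mk_s_eq_yuleSeries : PowerSeries.mk s = yuleSeries fun t => (c t : ℚ) ^ 2 := rfl

theorem X_mul_derivative_weightSeries :
    X * d⁄dX ℚ weightSeries = weightSeries + weightSeries ^ 2 :=
  X_mul_derivative_yuleSeries fun _ _ => (one_mul 1).symm

theorem X_mul_derivative_eSeries :
    X * d⁄dX ℚ eSeries = eSeries + (eSeries + weightSeries) ^ 2 := by
  rw [eSeries, X_mul_derivative_yuleSeries (g := fun t => (c t : ℚ) + 1) fun l r => by
    rw [c]; push_cast; ring]
  rw [show (fun t => (c t : ℚ) + 1) = (fun t => (c t : ℚ)) + fun _ => 1 from rfl, yuleSeries_add]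
  rfl

theorem X_mul_derivative_mk_s :
    X * d⁄dX ℚ (PowerSeries.mk s)
      = PowerSeries.mk s + (PowerSeries.mk s + (2 * eSeries + weightSeries)) ^ 2 := by
  have hsplit : (fun t => ((c t : ℚ) + 1) ^ 2)
      = (fun t => (c t : ℚ) ^ 2) + ((fun t => 2 * (c t : ℚ)) + fun _ => 1) := by
    funext t; simp only [Pi.add_apply]; ring
  rw [mk_s_eq_yuleSeries, X_mul_derivative_yuleSeries (g := fun t => ((c t : ℚ) + 1) ^ 2)
    fun l r => by rw [c]; push_cast; ring, hsplit, yuleSeries_add, yuleSeries_add,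
    yuleSeries_const_mul, map_ofNat]
  rfl

theorem coeff_eSeries_mul_weightSeries (n : ℕ) :
    coeff n (eSeries * weightSeries) = ∑ j ∈ range n, e j := by
  rw [coeff_mul_eq_sum_range_of_constantCoeff_eq_zero (g := weightSeries) _
    (constantCoeff_yuleSeries _)]
  refine sum_congr rfl fun j hj => ?_
  rw [coeff_eSeries, coeff_weightSeries (by have := mem_range.mp hj; omega), mul_one]

theorem coeff_two_mul_eSeries_add_weightSeries {n : ℕ} (hn : 1 ≤ n) :
    coeff n (2 * eSeries + weightSeries) = 2 * e n + 1 := by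
  rw [map_add, coeff_ofNat_mul, coeff_eSeries, coeff_weightSeries hn]

theorem coeff_two_mul_eSeries_add_weightSeries_sq {n : ℕ} (hn : 1 ≤ n) :
    coeff n ((2 * eSeries + weightSeries) ^ 2)
      = 4 * (n - 1) * e n - 4 * ∑ j ∈ range n, e j - 3 * (n - 1) := by
  -- `(2E + Y)² = 4(E + Y)² - 4EY - 3Y²`, and both squares are linear in `θE` and `θY`
  have hsq : (2 * eSeries + weightSeries) ^ 2
      = 4 * (X * d⁄dX ℚ eSeries - eSeries) - 4 * (eSeries * weightSeries)
        - 3 * (X * d⁄dX ℚ weightSeries - weightSeries) := by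
    rw [X_mul_derivative_eSeries, X_mul_derivative_weightSeries]
    ring
  rw [hsq, map_sub, map_sub, coeff_ofNat_mul, coeff_ofNat_mul, coeff_ofNat_mul, map_sub, map_sub,
    coeff_X_mul_derivative, coeff_X_mul_derivative, coeff_eSeries_mul_weightSeries,
    coeff_eSeries, coeff_weightSeries hn]
  ring

theorem mul_sub_one_mul_coeff_of_X_mul_derivative_eq {U : ℚ⟦X⟧}
    (hode : X * d⁄dX ℚ U = -PowerSeries.mk s * U) (n : ℕ) :
    n * (n - 1) * coeff n U
      = ∑ k ∈ range n, (3 * n - k - 3) * coeff k U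
        - 4 * ∑ k ∈ range n, (n - 2 * k - 1) * e (n - k) * coeff k U
        + 4 * ∑ k ∈ range n, (∑ j ∈ range (n - k), e j) * coeff k U := by
  have hD : constantCoeff (2 * eSeries + weightSeries) = 0 := by
    simp [eSeries, weightSeries]
  have h := congrArg (coeff n)
    (X_sq_mul_derivative_derivative_of_riccati hode X_mul_derivative_mk_s)
  rw [coeff_X_sq_mul_derivative_derivative, mul_comm _ (X * d⁄dX ℚ U), mul_comm _ U, map_sub,
    coeff_mul_eq_sum_range_of_constantCoeff_eq_zero _ (by simp [hD]),
    coeff_mul_eq_sum_range_of_constantCoeff_eq_zero _ (by simp [hD]), ← sum_sub_distrib] at h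
  rw [h, mul_sum, mul_sum, ← sum_sub_distrib, ← sum_add_distrib]
  refine sum_congr rfl fun k hk => ?_
  have hkn := mem_range.mp hk
  rw [coeff_X_mul_derivative, coeff_ofNat_mul, coeff_two_mul_eSeries_add_weightSeries (by omega),
    coeff_two_mul_eSeries_add_weightSeries_sq (by omega), Nat.cast_sub hkn.le]
  ring

theorem coeff_one_eq_zero_of_X_mul_derivative_eq {U : ℚ⟦X⟧}
    (hode : X * d⁄dX ℚ U = -PowerSeries.mk s * U) :
    coeff 1 U = 0 := by
  have h := congrArg (coeff 1) hode
  rw [coeff_X_mul_derivative, mk_s_eq_yuleSeries, neg_mul, map_neg, mul_comm _ U,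
    coeff_mul_eq_sum_range_of_constantCoeff_eq_zero _ (constantCoeff_yuleSeries _)] at h
  simpa [yuleSeries, c] using h

end PTree

open PowerSeries

theorem U_coeff_recurrence_general (U : ℚ⟦X⟧)
    (hode : (X : ℚ⟦X⟧) * d⁄dX ℚ U = -(PowerSeries.mk PTree.s) * U) :
    PowerSeries.coeff (R := ℚ) 1 U = 0 ∧
    ∀ n : ℕ, 2 ≤ n →
      PowerSeries.coeff (R := ℚ) n U =
          (1 / ((n : ℚ) * ((n : ℚ) - 1))) *
            ∑ k ∈ Finset.range n, (3 * (n : ℚ) - (k : ℚ) - 3) * PowerSeries.coeff (R := ℚ) k U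
        - (4 / ((n : ℚ) * ((n : ℚ) - 1))) *
            ∑ k ∈ Finset.range n,
              ((n : ℚ) - 2 * (k : ℚ) - 1) * PTree.e (n - k) * PowerSeries.coeff (R := ℚ) k U
        + (4 / ((n : ℚ) * ((n : ℚ) - 1))) *
            ∑ k ∈ Finset.range n,
              (∑ j ∈ Finset.range (n - k), PTree.e j) * PowerSeries.coeff (R := ℚ) k U := by
  refine ⟨PTree.coeff_one_eq_zero_of_X_mul_derivative_eq hode, fun n hn => ?_⟩
  have hn' : (2 : ℚ) ≤ n := by exact_mod_cast hn
  have hN : (n : ℚ) * (n - 1) ≠ 0 := mul_ne_zero (by linarith) (by linarith)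
  rw [← mul_div_cancel_left₀ (coeff n U) hN,
    PTree.mul_sub_one_mul_coeff_of_X_mul_derivative_eq hode n]
  ring

/-- If `U = Σ u_n z^n` is the (unique) formal power series over `ℚ` with constant
coefficient `1` satisfying `z·U′(z) = −S(z)·U(z)` where `S(z) = Σ s_n z^n`, then
`u_1 = 0` and for `n ≥ 2` the coefficients satisfy the stated recurrence. -/
theorem U_coeff_recurrence (U : ℚ⟦X⟧)
    (hU0 : PowerSeries.coeff (R := ℚ) 0 U = 1)
    (hode : (X : ℚ⟦X⟧) * d⁄dX ℚ U = -(PowerSeries.mk PTree.s) * U) :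
    PowerSeries.coeff (R := ℚ) 1 U = 0 ∧
    ∀ n : ℕ, 2 ≤ n →
      PowerSeries.coeff (R := ℚ) n U =
          (1 / ((n : ℚ) * ((n : ℚ) - 1))) *
            ∑ k ∈ Finset.range n, (3 * (n : ℚ) - (k : ℚ) - 3) * PowerSeries.coeff (R := ℚ) k U
        - (4 / ((n : ℚ) * ((n : ℚ) - 1))) *
            ∑ k ∈ Finset.range n,
              ((n : ℚ) - 2 * (k : ℚ) - 1) * PTree.e (n - k) * PowerSeries.coeff (R := ℚ) k U
        + (4 / ((n : ℚ) * ((n : ℚ) - 1))) *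
            ∑ k ∈ Finset.range n,
              (∑ j ∈ Finset.range (n - k), PTree.e j) * PowerSeries.coeff (R := ℚ) k U :=
  U_coeff_recurrence_general U hode
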